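/- Let F be L-smooth and let x̄ = (Σ_j b_j x_j)/(Σ_j b_j) be a weighted average with b_j > 0. Then F(x̄) ≤ (Σ_j b_j F(x_j))/(Σ_j b_j) + (L/2) · max_{j,j'} ‖x_j − x_{j'}‖². -/

import Mathlib

open scoped RealInnerProductSpace

/-!
A function with `L`-Lipschitz gradient lies above each of its tangent planes up to the
correction `-(L/2)‖z - y‖²`. Applying this at the weighted mean `x̄` to every `x_j` and averaging
with weights `b_j`, the linear terms cancel since `∑ b_j (x_j - x̄) = 0`; and every `‖x_j - x̄‖` is
at most the diameter of the `x_j`, because `x̄` lies in their convex hull, hence in every closed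
ball around `x_j` containing all of them.
-/

section LowerQuadraticBound

variable {E : Type*} [NormedAddCommGroup E] [InnerProductSpace ℝ E] [CompleteSpace E]

theorem HasGradientAt.hasDerivAt_comp_add_smul {F : E → ℝ} {g y v : E} {t : ℝ}
    (h : HasGradientAt F g (y + t • v)) :
    HasDerivAt (fun s : ℝ => F (y + s • v)) ⟪g, v⟫ t := by
  have hline : HasDerivAt (fun s : ℝ => y + s • v) v t := by
    simpa using ((hasDerivAt_id t).smul_const v).const_add y
  simpa [Function.comp_def] using h.hasFDerivAt.comp_hasDerivAt t hline

theorem tangent_sub_quadratic_le_of_lipschitz_gradient {F : E → ℝ} {gradF : E → E} {L : ℝ}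
    (hgrad : ∀ y, HasGradientAt F (gradF y) y)
    (hlip : ∀ y z, ‖gradF y - gradF z‖ ≤ L * ‖y - z‖) (y z : E) :
    F y + ⟪gradF y, z - y⟫ - L / 2 * ‖z - y‖ ^ 2 ≤ F z := by
  set v := z - y
  -- `φ' ≥ 0` on `[0, 1]` by the Lipschitz bound, and `φ 0 ≤ φ 1` is the claim.
  let φ : ℝ → ℝ := fun t => F (y + t • v) - t * ⟪gradF y, v⟫ + L / 2 * ‖v‖ ^ 2 * t ^ 2
  have hφ : ∀ t, HasDerivAt φ (⟪gradF (y + t • v) - gradF y, v⟫ + L * ‖v‖ ^ 2 * t) t := by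
    intro t
    refine (((hgrad (y + t • v)).hasDerivAt_comp_add_smul.sub
      ((hasDerivAt_id t).mul_const ⟪gradF y, v⟫)).add
      ((hasDerivAt_pow 2 t).const_mul (L / 2 * ‖v‖ ^ 2))).congr_deriv ?_
    rw [inner_sub_left]
    simp only [Nat.cast_ofNat]
    ring
  have hφ' : ∀ t ∈ interior (Set.Icc (0 : ℝ) 1),
      0 ≤ ⟪gradF (y + t • v) - gradF y, v⟫ + L * ‖v‖ ^ 2 * t := by
    intro t ht
    rw [interior_Icc] at ht
    have hgap : ‖gradF (y + t • v) - gradF y‖ ≤ L * t * ‖v‖ := by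
      simpa [norm_smul, abs_of_pos ht.1, mul_assoc] using hlip (y + t • v) y
    nlinarith [neg_le_of_abs_le (abs_real_inner_le_norm (gradF (y + t • v) - gradF y) v),
      mul_le_mul_of_nonneg_right hgap (norm_nonneg v)]
  have hmono : MonotoneOn φ (Set.Icc 0 1) :=
    monotoneOn_of_hasDerivWithinAt_nonneg (convex_Icc 0 1)
      (fun t _ => (hφ t).continuousAt.continuousWithinAt)
      (fun t _ => (hφ t).hasDerivWithinAt) hφ'
  have h01 := hmono (Set.left_mem_Icc.2 zero_le_one) (Set.right_mem_Icc.2 zero_le_one)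
    zero_le_one
  simp only [φ, v, zero_smul, add_zero, one_smul, add_sub_cancel] at h01
  linarith

end LowerQuadraticBound

section CenterMass

variable {ι E : Type*}

theorem Finset.sum_smul_sub_centerMass {R : Type*} [Field R] [AddCommGroup E] [Module R E]
    {t : Finset ι} {w : ι → R} (hw : ∑ i ∈ t, w i ≠ 0) (z : ι → E) :
    ∑ i ∈ t, w i • (z i - t.centerMass w z) = 0 := by
  simp only [smul_sub, Finset.sum_sub_distrib, ← Finset.sum_smul, Finset.centerMass,
    smul_inv_smul₀ hw, sub_self]

theorem Finset.norm_sub_centerMass_le [SeminormedAddCommGroup E] [NormedSpace ℝ E]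
    {t : Finset ι} {w : ι → ℝ} (hw₀ : ∀ i ∈ t, 0 ≤ w i) (hws : 0 < ∑ i ∈ t, w i)
    {z : ι → E} {i : ι} {r : ℝ} (hr : ∀ j ∈ t, ‖z i - z j‖ ≤ r) :
    ‖z i - t.centerMass w z‖ ≤ r := by
  rw [← dist_eq_norm, dist_comm, ← Metric.mem_closedBall]
  exact (convex_closedBall (z i) r).centerMass_mem hw₀ hws fun j hj => by
    rw [Metric.mem_closedBall, dist_comm, dist_eq_norm]
    exact hr j hj

end CenterMass

theorem apply_centerMass_le_of_lipschitz_gradient {ι E : Type*} [NormedAddCommGroup E]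
    [InnerProductSpace ℝ E] [CompleteSpace E] {F : E → ℝ} {gradF : E → E} {L : ℝ}
    (hL : 0 ≤ L) (hgrad : ∀ y, HasGradientAt F (gradF y) y)
    (hlip : ∀ y z, ‖gradF y - gradF z‖ ≤ L * ‖y - z‖)
    {t : Finset ι} {w : ι → ℝ} (hw₀ : ∀ i ∈ t, 0 ≤ w i) (hws : 0 < ∑ i ∈ t, w i)
    {z : ι → E} {r : ℝ} (hr : ∀ i ∈ t, ‖z i - t.centerMass w z‖ ≤ r) :
    F (t.centerMass w z) ≤ (∑ i ∈ t, w i * F (z i)) / (∑ i ∈ t, w i) + L / 2 * r ^ 2 := by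
  set c := t.centerMass w z
  have hpoint : ∀ i ∈ t, F c + ⟪gradF c, z i - c⟫ - L / 2 * r ^ 2 ≤ F (z i) := by
    intro i hi
    have hsq : L / 2 * ‖z i - c‖ ^ 2 ≤ L / 2 * r ^ 2 := by
      gcongr
      exact hr i hi
    linarith [tangent_sub_quadratic_le_of_lipschitz_gradient hgrad hlip c (z i)]
  have hfirst : ∑ i ∈ t, w i * ⟪gradF c, z i - c⟫ = 0 := by
    simp only [← real_inner_smul_right, ← inner_sum]
    rw [Finset.sum_smul_sub_centerMass hws.ne', inner_zero_right]
  have hsum : ∑ i ∈ t, w i * (F c + ⟪gradF c, z i - c⟫ - L / 2 * r ^ 2) ≤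
      ∑ i ∈ t, w i * F (z i) :=
    Finset.sum_le_sum fun i hi => mul_le_mul_of_nonneg_left (hpoint i hi) (hw₀ i hi)
  simp only [mul_sub, mul_add, Finset.sum_sub_distrib, Finset.sum_add_distrib, hfirst,
    ← Finset.sum_mul] at hsum
  rw [← sub_le_iff_le_add, le_div_iff₀ hws]
  linarith

theorem stmt10_general {d m : ℕ}
    (F : EuclideanSpace ℝ (Fin d) → ℝ)
    (gradF : EuclideanSpace ℝ (Fin d) → EuclideanSpace ℝ (Fin d))
    (L : ℝ) (hL : 0 < L)
    (hgrad : ∀ y, HasGradientAt F (gradF y) y)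
    (hlip : ∀ y z, ‖gradF y - gradF z‖ ≤ L * ‖y - z‖)
    (x : Fin (m + 1) → EuclideanSpace ℝ (Fin d))
    (b : Fin (m + 1) → ℝ) (hb : ∀ j, 0 < b j)
    (xbar : EuclideanSpace ℝ (Fin d))
    (hxbar : xbar = (∑ j, b j)⁻¹ • ∑ j, b j • x j) :
    F xbar ≤ (∑ j, b j * F (x j)) / (∑ j, b j) +
      L / 2 * Finset.univ.sup' Finset.univ_nonempty
        (fun p : Fin (m + 1) × Fin (m + 1) => ‖x p.1 - x p.2‖ ^ 2) := by
  set D := Finset.univ.sup' Finset.univ_nonempty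
    (fun p : Fin (m + 1) × Fin (m + 1) => ‖x p.1 - x p.2‖ ^ 2)
  have hD : ∀ j k, ‖x j - x k‖ ^ 2 ≤ D := fun j k =>
    Finset.le_sup' (fun p : Fin (m + 1) × Fin (m + 1) => ‖x p.1 - x p.2‖ ^ 2)
      (Finset.mem_univ (j, k))
  have hw₀ : ∀ j ∈ Finset.univ, 0 ≤ b j := fun j _ => (hb j).le
  have hws : 0 < ∑ j, b j := Finset.sum_pos (fun j _ => hb j) Finset.univ_nonempty
  have hdev : ∀ j ∈ Finset.univ, ‖x j - Finset.univ.centerMass b x‖ ≤ √D := fun j _ =>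
    Finset.norm_sub_centerMass_le hw₀ hws fun k _ => Real.le_sqrt_of_sq_le (hD j k)
  have key := apply_centerMass_le_of_lipschitz_gradient hL.le hgrad hlip hw₀ hws hdev
  rwa [Real.sq_sqrt ((sq_nonneg _).trans (hD 0 0)), Finset.centerMass, ← hxbar] at key

/-- For `L`-smooth `F` and a weighted merge `x̄ = (Σ b_j x_j)/(Σ b_j)` with `b_j > 0`:
`F(x̄) ≤ (Σ b_j F(x_j))/(Σ b_j) + (L/2) max_{j,j'} ‖x_j − x_{j'}‖²`. -/
theorem stmt10 {d m : ℕ}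
    (F : EuclideanSpace ℝ (Fin d) → ℝ)
    (gradF : EuclideanSpace ℝ (Fin d) → EuclideanSpace ℝ (Fin d))
    (L : ℝ) (hL : 0 < L)
    (hgrad : ∀ y, HasGradientAt F (gradF y) y)
    (hlip : ∀ y z, ‖gradF y - gradF z‖ ≤ L * ‖y - z‖)
    (hsmooth : ∀ y z, F z ≤ F y + ⟪gradF y, z - y⟫ + L / 2 * ‖z - y‖ ^ 2)
    (x : Fin (m + 1) → EuclideanSpace ℝ (Fin d))
    (b : Fin (m + 1) → ℝ) (hb : ∀ j, 0 < b j)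
    (xbar : EuclideanSpace ℝ (Fin d))
    (hxbar : xbar = (∑ j, b j)⁻¹ • ∑ j, b j • x j) :
    F xbar ≤ (∑ j, b j * F (x j)) / (∑ j, b j) +
      L / 2 * Finset.univ.sup' Finset.univ_nonempty
        (fun p : Fin (m + 1) × Fin (m + 1) => ‖x p.1 - x p.2‖ ^ 2) :=
  stmt10_general F gradF L hL hgrad hlip x b hb xbar hxbar
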